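/- (Theorem 3, part 2) Set g^(k)(z) = x(z) f^(k)(z) for k = 1, 2 and let C_{jk} be the cross-covariance matrix of g^(j)(Z) and g^(k)(Z) for Z ∼ π; suppose C_{22} is invertible and let A* = C_{12} C_{22}^{-1}. Then A* minimizes the generalized variance of the estimated regression coefficients: for every A ∈ ℝ^{d×d}, Tr(Cov[β̂^{A*}_MF, β̂^{A*}_MF]) ≤ Tr(Cov[β̂^A_MF, β̂^A_MF]), where β̂^A_MF = C_XX^{-1} Ĉ^A_XY. -/

import Mathlib

open MeasureTheory
open scoped Matrix

/-- Cross-covariance matrix of two random vectors `V, W : Ω → ℝ^d` under measure `P`: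
`(covMatrix P V W) i j = E[Vᵢ Wⱼ] − E[Vᵢ] E[Wⱼ]`. -/
noncomputable def covMatrix {Ω : Type*} [MeasurableSpace Ω] (P : Measure Ω)
    {d : ℕ} (V W : Ω → Fin d → ℝ) : Matrix (Fin d) (Fin d) ℝ :=
  Matrix.of fun i j =>
    (∫ ω, V ω i * W ω j ∂P) - (∫ ω, V ω i ∂P) * (∫ ω, W ω j ∂P)

/-- Scalar-coefficient vector-valued bi-fidelity Monte Carlo estimator
`ĝ^α_MF = (1/m₁) Σ_{i<m₁} g¹(zᵢ) + α ((1/m₂) Σ_{i<m₂} g²(zᵢ) − (1/m₁) Σ_{i<m₁} g²(zᵢ))`,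
as a function of the training inputs `ω ∈ 𝒵^{m₂}`. -/
noncomputable def gMF {𝒵 : Type*} {d : ℕ} (g1 g2 : 𝒵 → Fin d → ℝ) (m1 m2 : ℕ) (α : ℝ)
    (ω : Fin m2 → 𝒵) : Fin d → ℝ := fun j =>
  (1 / (m1 : ℝ)) * ∑ i ∈ Finset.univ.filter (fun i : Fin m2 => (i : ℕ) < m1), g1 (ω i) j
  + α * ((1 / (m2 : ℝ)) * ∑ i : Fin m2, g2 (ω i) j
    - (1 / (m1 : ℝ)) * ∑ i ∈ Finset.univ.filter (fun i : Fin m2 => (i : ℕ) < m1), g2 (ω i) j)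

/-- Matrix-coefficient vector-valued bi-fidelity Monte Carlo estimator
`ĝ^A_MF = (1/m₁) Σ_{i<m₁} g¹(zᵢ) + A ((1/m₂) Σ_{i<m₂} g²(zᵢ) − (1/m₁) Σ_{i<m₁} g²(zᵢ))`. -/
noncomputable def gMFA {𝒵 : Type*} {d : ℕ} (g1 g2 : 𝒵 → Fin d → ℝ) (m1 m2 : ℕ)
    (A : Matrix (Fin d) (Fin d) ℝ) (ω : Fin m2 → 𝒵) : Fin d → ℝ :=
  (fun j => (1 / (m1 : ℝ)) *
      ∑ i ∈ Finset.univ.filter (fun i : Fin m2 => (i : ℕ) < m1), g1 (ω i) j)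
  + A *ᵥ (fun j => (1 / (m2 : ℝ)) * ∑ i : Fin m2, g2 (ω i) j
      - (1 / (m1 : ℝ)) * ∑ i ∈ Finset.univ.filter (fun i : Fin m2 => (i : ℕ) < m1), g2 (ω i) j)

open scoped ENNReal

namespace Stmt16Aux

noncomputable def covFn {Ω : Type*} [MeasurableSpace Ω] (P : Measure Ω) (X Y : Ω → ℝ) : ℝ :=
  (∫ ω, X ω * Y ω ∂P) - (∫ ω, X ω ∂P) * (∫ ω, Y ω ∂P)

variable {𝒵 : Type*} [MeasurableSpace 𝒵] {π : Measure 𝒵} [IsProbabilityMeasure π] {m2 : ℕ}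

lemma mp_eval (i : Fin m2) :
    MeasurePreserving (fun ω : Fin m2 → 𝒵 => ω i) (Measure.pi fun _ : Fin m2 => π) π := by
  refine ⟨measurable_pi_apply i, ?_⟩
  ext s hs
  rw [Measure.map_apply (measurable_pi_apply i) hs]
  have hpre : (fun ω : Fin m2 → 𝒵 => ω i) ⁻¹' s
      = Set.pi Set.univ (fun j => if j = i then s else Set.univ) := by
    ext ω
    simp only [Set.mem_preimage, Set.mem_pi, Set.mem_univ, forall_true_left]
    constructor
    · intro h j
      by_cases hj : j = i
      · subst hj; simpa using h
      · simp [hj]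
    · intro h
      have := h i
      simpa using this
  rw [hpre, Measure.pi_pi]
  have h1 : ∀ j : Fin m2, π (if j = i then s else Set.univ) = if j = i then π s else 1 := by
    intro j; by_cases hj : j = i <;> simp [hj]
  simp only [h1]
  simp [Finset.prod_ite_eq']

lemma mp_pair {i k : Fin m2} (hik : i ≠ k) :
    MeasurePreserving (fun ω : Fin m2 → 𝒵 => (ω i, ω k)) (Measure.pi fun _ : Fin m2 => π)
      (π.prod π) := by
  refine ⟨(measurable_pi_apply i).prodMk (measurable_pi_apply k), ?_⟩
  refine (Measure.prod_eq fun s t hs ht => ?_).symm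
  rw [Measure.map_apply ((measurable_pi_apply i).prodMk (measurable_pi_apply k)) (hs.prod ht)]
  have hpre : (fun ω : Fin m2 → 𝒵 => (ω i, ω k)) ⁻¹' (s ×ˢ t)
      = Set.pi Set.univ (fun j => if j = i then s else if j = k then t else Set.univ) := by
    ext ω
    simp only [Set.mem_preimage, Set.mem_prod, Set.mem_pi, Set.mem_univ, forall_true_left]
    constructor
    · rintro ⟨h1, h2⟩ j
      by_cases hj : j = i
      · subst hj; simp [h1]
      · by_cases hj2 : j = k
        · subst hj2; simp [hj, h2]
        · simp [hj, hj2]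
    · intro h
      refine ⟨?_, ?_⟩
      · have := h i; simpa using this
      · have := h k; simpa [Ne.symm hik] using this
  rw [hpre, Measure.pi_pi]
  have h1 : ∀ j : Fin m2,
      π (if j = i then s else if j = k then t else Set.univ)
        = (if j = i then π s else 1) * (if j = k then π t else 1) := by
    intro j
    by_cases hj : j = i
    · subst hj; simp [hik]
    · by_cases hj2 : j = k
      · subst hj2; simp [hj]
      · simp [hj, hj2]
  simp only [h1, Finset.prod_mul_distrib]
  simp [Finset.prod_ite_eq']

lemma integral_eval (i : Fin m2) (f : 𝒵 → ℝ) (hf : Measurable f) :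
    ∫ ω, f (ω i) ∂(Measure.pi fun _ : Fin m2 => π) = ∫ z, f z ∂π := by
  conv_rhs => rw [← (mp_eval (π := π) i).map_eq]
  rw [integral_map (measurable_pi_apply i).aemeasurable]
  rw [(mp_eval (π := π) i).map_eq]
  exact hf.aestronglyMeasurable

lemma integral_pair {i k : Fin m2} (hik : i ≠ k) (u v : 𝒵 → ℝ)
    (hu : Measurable u) (hv : Measurable v) :
    ∫ ω, u (ω i) * v (ω k) ∂(Measure.pi fun _ : Fin m2 => π)
      = (∫ z, u z ∂π) * (∫ z, v z ∂π) := by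
  have hm := (mp_pair (π := π) hik).measurable
  have h1 : ∫ ω, u (ω i) * v (ω k) ∂(Measure.pi fun _ : Fin m2 => π)
      = ∫ p : 𝒵 × 𝒵, u p.1 * v p.2 ∂(π.prod π) := by
    conv_rhs => rw [← (mp_pair (π := π) hik).map_eq]
    rw [integral_map hm.aemeasurable]
    rw [(mp_pair (π := π) hik).map_eq]
    exact ((hu.comp measurable_fst).mul (hv.comp measurable_snd)).aestronglyMeasurable
  rw [h1, integral_prod_mul]

lemma integrable_eval (i : Fin m2) {f : 𝒵 → ℝ} (hf : Measurable f) (hfi : Integrable f π) :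
    Integrable (fun ω : Fin m2 → 𝒵 => f (ω i)) (Measure.pi fun _ : Fin m2 => π) := by
  have h1 : Integrable f ((Measure.pi fun _ : Fin m2 => π).map fun ω => ω i) := by
    rw [(mp_eval (π := π) i).map_eq]; exact hfi
  have h2 : AEStronglyMeasurable f ((Measure.pi fun _ : Fin m2 => π).map fun ω => ω i) := by
    rw [(mp_eval (π := π) i).map_eq]; exact hf.aestronglyMeasurable
  exact (integrable_map_measure h2 (measurable_pi_apply i).aemeasurable).mp h1

lemma integrable_pair {i k : Fin m2} (hik : i ≠ k) {u v : 𝒵 → ℝ}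
    (hu : Measurable u) (hv : Measurable v) (hui : Integrable u π) (hvi : Integrable v π) :
    Integrable (fun ω : Fin m2 → 𝒵 => u (ω i) * v (ω k))
      (Measure.pi fun _ : Fin m2 => π) := by
  have hm := (mp_pair (π := π) hik).measurable
  have hprod : Integrable (fun p : 𝒵 × 𝒵 => u p.1 * v p.2) (π.prod π) := hui.mul_prod hvi
  have h1 : Integrable (fun p : 𝒵 × 𝒵 => u p.1 * v p.2)
      ((Measure.pi fun _ : Fin m2 => π).map fun ω => (ω i, ω k)) := by
    rw [(mp_pair (π := π) hik).map_eq]; exact hprod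
  have h2 : AEStronglyMeasurable (fun p : 𝒵 × 𝒵 => u p.1 * v p.2)
      ((Measure.pi fun _ : Fin m2 => π).map fun ω => (ω i, ω k)) := by
    rw [(mp_pair (π := π) hik).map_eq]
    exact ((hu.comp measurable_fst).mul (hv.comp measurable_snd)).aestronglyMeasurable
  exact (integrable_map_measure h2 hm.aemeasurable).mp h1

lemma memℒp_mul_integrable {u v : 𝒵 → ℝ} (hu : MemLp u 2 π) (hv : MemLp v 2 π) :
    Integrable (fun z => u z * v z) π := by
  have h12 : (1 : ℝ≥0∞) / 1 = 1 / 2 + 1 / 2 := by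
    rw [ENNReal.div_add_div_same, div_one]
    norm_num
    rw [ENNReal.div_self] <;> norm_num
  have := hv.smul hu (r := 1) (hpqr := ⟨by simpa only [one_div] using h12.symm⟩)
  rw [memLp_one_iff_integrable] at this
  exact this

end Stmt16Aux

namespace Stmt16Aux

set_option linter.unusedSectionVars false

variable {𝒵 : Type*} [MeasurableSpace 𝒵] {π : Measure 𝒵} [IsProbabilityMeasure π] {m2 : ℕ}

lemma cov_sum_eval (π : Measure 𝒵) [IsProbabilityMeasure π] (m2 : ℕ)
    {τ σ : Type*} [Fintype τ] [Fintype σ]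
    (w : τ → 𝒵 → ℝ) (w' : σ → 𝒵 → ℝ) (ν : τ → Fin m2) (ν' : σ → Fin m2)
    (r : τ → ℝ) (r' : σ → ℝ)
    (hw : ∀ t, Measurable (w t)) (hw' : ∀ s, Measurable (w' s))
    (hL2 : ∀ t, MemLp (w t) 2 π) (hL2' : ∀ s, MemLp (w' s) 2 π) :
    covFn (Measure.pi fun _ : Fin m2 => π)
        (fun ω => ∑ t, r t * w t (ω (ν t))) (fun ω => ∑ s, r' s * w' s (ω (ν' s)))
      = ∑ t, ∑ s, r t * r' s *
          (if ν t = ν' s then covFn π (w t) (w' s) else 0) := by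
  set P := (Measure.pi fun _ : Fin m2 => π) with hP
  have hInt : ∀ t, Integrable (w t) π := fun t => (hL2 t).integrable one_le_two
  have hInt' : ∀ s, Integrable (w' s) π := fun s => (hL2' s).integrable one_le_two
  have hIntP : ∀ t, Integrable (fun ω : Fin m2 → 𝒵 => w t (ω (ν t))) P :=
    fun t => integrable_eval (ν t) (hw t) (hInt t)
  have hIntP' : ∀ s, Integrable (fun ω : Fin m2 → 𝒵 => w' s (ω (ν' s))) P :=
    fun s => integrable_eval (ν' s) (hw' s) (hInt' s)
  have hmulInt : ∀ t s, Integrable (fun z => w t z * w' s z) π :=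
    fun t s => memℒp_mul_integrable (hL2 t) (hL2' s)
  have hPP : ∀ t s, Integrable (fun ω : Fin m2 → 𝒵 => w t (ω (ν t)) * w' s (ω (ν' s))) P := by
    intro t s
    by_cases h : ν t = ν' s
    · rw [h]
      exact integrable_eval (ν' s) ((hw t).mul (hw' s)) (hmulInt t s)
    · exact integrable_pair h (hw t) (hw' s) (hInt t) (hInt' s)
  have hE : ∀ t s, ∫ ω, w t (ω (ν t)) * w' s (ω (ν' s)) ∂P
      = if ν t = ν' s then ∫ z, w t z * w' s z ∂π
        else (∫ z, w t z ∂π) * (∫ z, w' s z ∂π) := by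
    intro t s
    by_cases h : ν t = ν' s
    · rw [if_pos h, h]
      exact integral_eval (ν' s) _ ((hw t).mul (hw' s))
    · rw [if_neg h]
      exact integral_pair h _ _ (hw t) (hw' s)
  have step1 : ∫ ω, (∑ t, r t * w t (ω (ν t))) ∂P = ∑ t, r t * ∫ z, w t z ∂π := by
    rw [integral_finset_sum _ (fun t _ => (hIntP t).const_mul (r t))]
    refine Finset.sum_congr rfl fun t _ => ?_
    rw [integral_const_mul, integral_eval _ _ (hw t)]
  have step1' : ∫ ω, (∑ s, r' s * w' s (ω (ν' s))) ∂P = ∑ s, r' s * ∫ z, w' s z ∂π := by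
    rw [integral_finset_sum _ (fun s _ => (hIntP' s).const_mul (r' s))]
    refine Finset.sum_congr rfl fun s _ => ?_
    rw [integral_const_mul, integral_eval _ _ (hw' s)]
  have step2 : ∫ ω, (∑ t, r t * w t (ω (ν t))) * (∑ s, r' s * w' s (ω (ν' s))) ∂P
      = ∑ t, ∑ s, r t * r' s *
          (if ν t = ν' s then ∫ z, w t z * w' s z ∂π
            else (∫ z, w t z ∂π) * (∫ z, w' s z ∂π)) := by
    have hpt : ∀ ω : Fin m2 → 𝒵,
        (∑ t, r t * w t (ω (ν t))) * (∑ s, r' s * w' s (ω (ν' s)))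
          = ∑ t, ∑ s, (r t * r' s) * (w t (ω (ν t)) * w' s (ω (ν' s))) := by
      intro ω
      rw [Finset.sum_mul_sum]
      exact Finset.sum_congr rfl fun t _ => Finset.sum_congr rfl fun s _ => by ring
    simp_rw [hpt]
    rw [integral_finset_sum _ (fun t _ =>
      integrable_finset_sum _ (fun s _ => ((hPP t s).const_mul (r t * r' s))))]
    refine Finset.sum_congr rfl fun t _ => ?_
    rw [integral_finset_sum _ (fun s _ => ((hPP t s).const_mul (r t * r' s)))]
    refine Finset.sum_congr rfl fun s _ => ?_
    rw [integral_const_mul, hE t s]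
  rw [covFn, step2, step1, step1', Finset.sum_mul_sum, ← Finset.sum_sub_distrib]
  refine Finset.sum_congr rfl fun t _ => ?_
  rw [← Finset.sum_sub_distrib]
  refine Finset.sum_congr rfl fun s _ => ?_
  by_cases h : ν t = ν' s
  · simp only [h, if_true, covFn]
    ring
  · simp only [h, if_false]
    ring

end Stmt16Aux

namespace Stmt16Aux

set_option linter.unusedSectionVars false

open ProbabilityTheory

variable {𝒵 : Type*} [MeasurableSpace 𝒵]

lemma cov_sum_eval₂ (π : Measure 𝒵) [IsProbabilityMeasure π] (m2 : ℕ)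
    {ι κ : Type*} [Fintype ι] [Fintype κ]
    (w : ι → 𝒵 → ℝ) (w' : κ → 𝒵 → ℝ) (p : ι → Fin m2 → ℝ) (q : κ → Fin m2 → ℝ)
    (hw : ∀ a, Measurable (w a)) (hw' : ∀ b, Measurable (w' b))
    (hL2 : ∀ a, MemLp (w a) 2 π) (hL2' : ∀ b, MemLp (w' b) 2 π) :
    covFn (Measure.pi fun _ : Fin m2 => π)
        (fun ω => ∑ a, ∑ i, p a i * w a (ω i)) (fun ω => ∑ b, ∑ i, q b i * w' b (ω i))
      = ∑ a, ∑ b, (∑ i, p a i * q b i) * covFn π (w a) (w' b) := by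
  classical
  have h := cov_sum_eval π m2 (fun t : ι × Fin m2 => w t.1) (fun t : κ × Fin m2 => w' t.1)
    (fun t => t.2) (fun t => t.2) (fun t => p t.1 t.2) (fun t => q t.1 t.2)
    (fun t => hw t.1) (fun t => hw' t.1) (fun t => hL2 t.1) (fun t => hL2' t.1)
  have e1 : (fun ω : Fin m2 → 𝒵 => ∑ a, ∑ i, p a i * w a (ω i))
      = fun ω => ∑ t : ι × Fin m2, p t.1 t.2 * w t.1 (ω t.2) := by
    funext ω
    exact (Fintype.sum_prod_type
      (f := fun t : ι × Fin m2 => p t.1 t.2 * w t.1 (ω t.2))).symm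
  have e2 : (fun ω : Fin m2 → 𝒵 => ∑ b, ∑ i, q b i * w' b (ω i))
      = fun ω => ∑ t : κ × Fin m2, q t.1 t.2 * w' t.1 (ω t.2) := by
    funext ω
    exact (Fintype.sum_prod_type
      (f := fun t : κ × Fin m2 => q t.1 t.2 * w' t.1 (ω t.2))).symm
  rw [e1, e2, h]
  simp only [Fintype.sum_prod_type]
  refine Finset.sum_congr rfl fun a _ => ?_
  rw [Finset.sum_comm]
  refine Finset.sum_congr rfl fun b _ => ?_
  rw [Finset.sum_mul]
  refine Finset.sum_congr rfl fun i _ => ?_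
  simp only [mul_ite, mul_zero]
  rw [Finset.sum_ite_eq]
  simp



variable {𝒵 : Type*} [MeasurableSpace 𝒵] {π : Measure 𝒵} [IsProbabilityMeasure π]

lemma covFn_sq_nonneg (X : 𝒵 → ℝ) (hX : MemLp X 2 π) : 0 ≤ covFn π X X := by
  have h := variance_nonneg X π
  rw [variance_eq_sub hX] at h
  have : covFn π X X = (∫ z, (X ^ 2) z ∂π) - (∫ z, X z ∂π) ^ 2 := by
    simp [covFn, sq, Pi.pow_apply]
  rw [this]
  exact h

lemma covFn_sum_sum {ι : Type*} [Fintype ι] (u : ι → 𝒵 → ℝ)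
    (hm : ∀ a, Measurable (u a)) (hL2 : ∀ a, MemLp (u a) 2 π) (r r' : ι → ℝ) :
    covFn π (fun z => ∑ a, r a * u a z) (fun z => ∑ b, r' b * u b z)
      = ∑ a, ∑ b, r a * r' b * covFn π (u a) (u b) := by
  have h1 := cov_sum_eval π 1 u u (fun _ => 0) (fun _ => 0) r r' hm hm hL2 hL2
  simp only [if_true, eq_self_iff_true] at h1
  have h2 : covFn (Measure.pi fun _ : Fin 1 => π)
      (fun ω => ∑ a, r a * u a (ω 0)) (fun ω => ∑ b, r' b * u b (ω 0))
      = covFn π (fun z => ∑ a, r a * u a z) (fun z => ∑ b, r' b * u b z) := by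
    unfold covFn
    have hma : Measurable fun z => ∑ a, r a * u a z :=
      Finset.measurable_sum _ fun a _ => (hm a).const_mul _
    have hmb : Measurable fun z => ∑ b, r' b * u b z :=
      Finset.measurable_sum _ fun b _ => (hm b).const_mul _
    simp only [integral_eval (π := π) 0 (fun z => (∑ a, r a * u a z) * ∑ b, r' b * u b z)
      (hma.mul hmb), integral_eval (π := π) 0 _ hma,
      integral_eval (π := π) 0 _ hmb]
  rw [← h2, h1]

lemma quad_nonneg {d : ℕ} (u : Fin d → 𝒵 → ℝ)
    (hm : ∀ a, Measurable (u a)) (hL2 : ∀ a, MemLp (u a) 2 π) (v : Fin d → ℝ) :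
    0 ≤ ∑ a, ∑ b, v a * v b * covFn π (u a) (u b) := by
  rw [← covFn_sum_sum u hm hL2 v v]
  refine covFn_sq_nonneg _ ?_
  have : (fun z => ∑ a, v a * u a z) = (fun z => ∑ a, (fun w => v a * u a w) z) := rfl
  exact memLp_finset_sum Finset.univ fun a _ => (hL2 a).const_mul (v a)

end Stmt16Aux

namespace Stmt16Aux

set_option linter.unusedSectionVars false

noncomputable def pS (m1 : ℕ) {m2 : ℕ} (i : Fin m2) : ℝ :=
  if (i : ℕ) < m1 then (1 / (m1 : ℝ)) else 0

noncomputable def pD (m1 : ℕ) {m2 : ℕ} (i : Fin m2) : ℝ := 1 / (m2 : ℝ) - pS m1 i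

lemma card_filter_lt {m1 m2 : ℕ} (hm12 : m1 ≤ m2) :
    (Finset.univ.filter fun i : Fin m2 => (i : ℕ) < m1).card = m1 := by
  have h : (Finset.univ.filter fun i : Fin m2 => (i : ℕ) < m1)
      = Finset.map (Fin.castLEEmb hm12) Finset.univ := by
    ext i
    simp only [Finset.mem_filter, Finset.mem_map, Finset.mem_univ, true_and]
    constructor
    · intro hi
      exact ⟨⟨(i : ℕ), hi⟩, by simp [Fin.castLEEmb, Fin.castLE, Fin.ext_iff]⟩
    · rintro ⟨a, _, rfl⟩
      simpa [Fin.castLEEmb, Fin.castLE] using a.2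
  rw [h, Finset.card_map, Finset.card_univ, Fintype.card_fin]

lemma sum_ite_const {m1 m2 : ℕ} (hm12 : m1 ≤ m2) (c : ℝ) :
    ∑ i : Fin m2, (if (i : ℕ) < m1 then c else 0) = (m1 : ℝ) * c := by
  classical
  rw [← Finset.sum_filter, Finset.sum_const, card_filter_lt hm12, nsmul_eq_mul]

lemma sum_pS {m1 m2 : ℕ} (hm1 : 0 < m1) (hm12 : m1 ≤ m2) :
    ∑ i : Fin m2, pS m1 i = 1 := by
  have hm1' : (m1 : ℝ) ≠ 0 := Nat.cast_ne_zero.mpr hm1.ne'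
  simp only [pS]
  rw [sum_ite_const hm12]
  field_simp

lemma sum_pS_pS {m1 m2 : ℕ} (hm1 : 0 < m1) (hm12 : m1 ≤ m2) :
    ∑ i : Fin m2, pS m1 i * pS m1 i = 1 / (m1 : ℝ) := by
  have hm1' : (m1 : ℝ) ≠ 0 := Nat.cast_ne_zero.mpr hm1.ne'
  have h : ∀ i : Fin m2, pS m1 i * pS m1 i
      = if (i : ℕ) < m1 then (1 / (m1 : ℝ)) * (1 / (m1 : ℝ)) else 0 := by
    intro i; by_cases hi : (i : ℕ) < m1 <;> simp [pS, hi]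
  simp only [h]
  rw [sum_ite_const hm12]
  field_simp

lemma sum_pS_pD {m1 m2 : ℕ} (hm1 : 0 < m1) (hm12 : m1 ≤ m2) :
    ∑ i : Fin m2, pS m1 i * pD m1 i = 1 / (m2 : ℝ) - 1 / (m1 : ℝ) := by
  have hm2 : 0 < m2 := lt_of_lt_of_le hm1 hm12
  simp only [pD, mul_sub]
  rw [Finset.sum_sub_distrib]
  have h1 : ∑ i : Fin m2, pS m1 i * (1 / (m2 : ℝ)) = 1 / (m2 : ℝ) := by
    rw [← Finset.sum_mul, sum_pS hm1 hm12, one_mul]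
  rw [h1, sum_pS_pS hm1 hm12]

lemma sum_pD_pS {m1 m2 : ℕ} (hm1 : 0 < m1) (hm12 : m1 ≤ m2) :
    ∑ i : Fin m2, pD m1 i * pS m1 i = 1 / (m2 : ℝ) - 1 / (m1 : ℝ) := by
  rw [← sum_pS_pD hm1 hm12]
  exact Finset.sum_congr rfl fun i _ => mul_comm _ _

lemma sum_pD_pD {m1 m2 : ℕ} (hm1 : 0 < m1) (hm12 : m1 ≤ m2) :
    ∑ i : Fin m2, pD m1 i * pD m1 i = 1 / (m1 : ℝ) - 1 / (m2 : ℝ) := by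
  have hm2 : 0 < m2 := lt_of_lt_of_le hm1 hm12
  have hm2' : (m2 : ℝ) ≠ 0 := Nat.cast_ne_zero.mpr hm2.ne'
  have hsplit : ∀ i : Fin m2, pD m1 i * pD m1 i
      = (1 / (m2 : ℝ)) * (1 / (m2 : ℝ)) - pS m1 i * (1 / (m2 : ℝ)) * 2
        + pS m1 i * pS m1 i := by
    intro i; simp only [pD]; ring
  simp only [hsplit]
  rw [Finset.sum_add_distrib, Finset.sum_sub_distrib, sum_pS_pS hm1 hm12]
  have h1 : ∑ _i : Fin m2, (1 / (m2 : ℝ)) * (1 / (m2 : ℝ)) = 1 / (m2 : ℝ) := by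
    rw [Finset.sum_const, Finset.card_univ, Fintype.card_fin, nsmul_eq_mul]
    field_simp
  have h2 : ∑ i : Fin m2, pS m1 i * (1 / (m2 : ℝ)) * 2 = (1 / (m2 : ℝ)) * 2 := by
    rw [← Finset.sum_mul, ← Finset.sum_mul, sum_pS hm1 hm12, one_mul]
  rw [h1, h2]
  ring

lemma trace_form {d : ℕ} (M N C : Matrix (Fin d) (Fin d) ℝ) :
    ∑ j, ∑ a, ∑ b, M j a * N j b * C a b = (M * C * Nᵀ).trace := by
  simp only [Matrix.trace, Matrix.diag, Matrix.mul_apply, Matrix.transpose_apply,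
    Finset.sum_mul]
  refine Finset.sum_congr rfl fun j _ => ?_
  rw [Finset.sum_comm]
  exact Finset.sum_congr rfl fun a _ => Finset.sum_congr rfl fun b _ => by ring

lemma triple_sum_trace {d : ℕ} (M N C : Matrix (Fin d) (Fin d) ℝ) (e : ℝ) :
    ∑ j, ∑ a, ∑ b, (M j a * N j b * e) * C a b = e * (M * C * Nᵀ).trace := by
  rw [← trace_form M N C, Finset.mul_sum]
  refine Finset.sum_congr rfl fun j _ => ?_
  rw [Finset.mul_sum]
  refine Finset.sum_congr rfl fun a _ => ?_
  rw [Finset.mul_sum]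
  exact Finset.sum_congr rfl fun b _ => by ring

end Stmt16Aux

namespace Stmt16Aux

set_option linter.unusedSectionVars false

lemma sum_pS_fn {m1 m2 : ℕ} (F : Fin m2 → ℝ) :
    ∑ i : Fin m2, pS m1 i * F i
      = (1 / (m1 : ℝ)) * ∑ i ∈ Finset.univ.filter (fun i : Fin m2 => (i : ℕ) < m1), F i := by
  simp only [pS, ite_mul, zero_mul, Finset.mul_sum, Finset.sum_filter, mul_ite, mul_zero]

lemma sum_pD_fn {m1 m2 : ℕ} (F : Fin m2 → ℝ) :
    ∑ i : Fin m2, pD m1 i * F i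
      = (1 / (m2 : ℝ)) * ∑ i : Fin m2, F i
        - (1 / (m1 : ℝ)) * ∑ i ∈ Finset.univ.filter (fun i : Fin m2 => (i : ℕ) < m1), F i := by
  simp only [pD, sub_mul, Finset.sum_sub_distrib, sum_pS_fn, ← Finset.mul_sum]

lemma mul_apply_sum {d : ℕ} (B A : Matrix (Fin d) (Fin d) ℝ) (j : Fin d) (w : Fin d → ℝ) :
    ∑ a, B j a * (∑ b, A a b * w b) = ∑ b, (B * A) j b * w b := by
  simp only [Finset.mul_sum]
  rw [Finset.sum_comm]
  refine Finset.sum_congr rfl fun b _ => ?_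
  rw [Matrix.mul_apply, Finset.sum_mul]
  exact Finset.sum_congr rfl fun a _ => by ring

def uu {𝒵 : Type*} {d : ℕ} (g1 g2 : 𝒵 → Fin d → ℝ) : (Fin d ⊕ Fin d) → 𝒵 → ℝ
  | Sum.inl a => fun z => g1 z a
  | Sum.inr a => fun z => g2 z a

noncomputable def coefA {d : ℕ} (B X : Matrix (Fin d) (Fin d) ℝ) (m1 : ℕ) {m2 : ℕ}
    (j : Fin d) : (Fin d ⊕ Fin d) → Fin m2 → ℝ
  | Sum.inl a => fun i => B j a * pS m1 i
  | Sum.inr a => fun i => X j a * pD m1 i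

end Stmt16Aux

open Stmt16Aux


/-- Theorem 3, part 2: with g⁽ᵏ⁾(z) = x(z) f⁽ᵏ⁾(z) and C₂₂ invertible,
A* = C₁₂ C₂₂⁻¹ minimizes the generalized variance of the estimated regression
coefficients β̂^A_MF = C_XX⁻¹ Ĉ^A_XY. -/
theorem stmt_16 {𝒵 : Type*} [MeasurableSpace 𝒵] (π : Measure 𝒵) [IsProbabilityMeasure π]
    {d : ℕ} (x : 𝒵 → Fin d → ℝ) (f1 f2 : 𝒵 → ℝ)
    (hxm : ∀ j, Measurable fun z => x z j) (hf1m : Measurable f1) (hf2m : Measurable f2)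
    (hL2₁ : ∀ j, MemLp (fun z => x z j * f1 z) 2 π)
    (hL2₂ : ∀ j, MemLp (fun z => x z j * f2 z) 2 π)
    {m1 m2 : ℕ} (hm1 : 0 < m1) (hm12 : m1 ≤ m2)
    (g1 g2 : 𝒵 → Fin d → ℝ)
    (hg1 : g1 = fun z j => x z j * f1 z) (hg2 : g2 = fun z j => x z j * f2 z)
    (hC22 : IsUnit (covMatrix π g2 g2).det)
    (Astar : Matrix (Fin d) (Fin d) ℝ)
    (hAstar : Astar = covMatrix π g1 g2 * (covMatrix π g2 g2)⁻¹)
    (CXX : Matrix (Fin d) (Fin d) ℝ)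
    (hCXX : CXX = Matrix.of fun i j => ∫ z, x z i * x z j ∂π)
    (hinv : IsUnit CXX.det)
    (βhat : Matrix (Fin d) (Fin d) ℝ → (Fin m2 → 𝒵) → Fin d → ℝ)
    (hβhat : ∀ A ω, βhat A ω = CXX⁻¹ *ᵥ gMFA g1 g2 m1 m2 A ω) :
    ∀ A : Matrix (Fin d) (Fin d) ℝ,
      (covMatrix (Measure.pi fun _ : Fin m2 => π) (βhat Astar) (βhat Astar)).trace
        ≤ (covMatrix (Measure.pi fun _ : Fin m2 => π) (βhat A) (βhat A)).trace := by
  classical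
  intro A
  have hm1' : (m1 : ℝ) ≠ 0 := Nat.cast_ne_zero.mpr hm1.ne'
  -- measurability and L² facts for the components of g1, g2
  have hg1m : ∀ a, Measurable fun z => g1 z a := by
    intro a; simp only [hg1]; exact (hxm a).mul hf1m
  have hg2m : ∀ a, Measurable fun z => g2 z a := by
    intro a; simp only [hg2]; exact (hxm a).mul hf2m
  have hg1L2 : ∀ a, MemLp (fun z => g1 z a) 2 π := by
    intro a; simp only [hg1]; exact hL2₁ a
  have hg2L2 : ∀ a, MemLp (fun z => g2 z a) 2 π := by
    intro a; simp only [hg2]; exact hL2₂ a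
  have hum : ∀ s, Measurable (uu g1 g2 s) := by
    rintro (a | a)
    · simpa [uu] using hg1m a
    · simpa [uu] using hg2m a
  have huL2 : ∀ s, MemLp (uu g1 g2 s) 2 π := by
    rintro (a | a)
    · simpa [uu] using hg1L2 a
    · simpa [uu] using hg2L2 a
  -- expansion of the estimator as a linear combination of coordinate evaluations
  have hexp : ∀ (A' : Matrix (Fin d) (Fin d) ℝ) (ω : Fin m2 → 𝒵) (j : Fin d),
      βhat A' ω j = ∑ s : Fin d ⊕ Fin d, ∑ i : Fin m2,
        coefA CXX⁻¹ (CXX⁻¹ * A') m1 j s i * uu g1 g2 s (ω i) := by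
    intro A' ω j
    rw [hβhat]
    rw [Fintype.sum_sum_type]
    simp only [coefA, uu]
    show (CXX⁻¹ *ᵥ gMFA g1 g2 m1 m2 A' ω) j = _
    simp only [Matrix.mulVec, dotProduct, gMFA, Pi.add_apply]
    have hR1 : ∀ (M : Matrix (Fin d) (Fin d) ℝ) (a : Fin d),
        (∑ i : Fin m2, (M j a * pS m1 i) * g1 (ω i) a)
          = M j a * ((1 / (m1 : ℝ)) *
              ∑ i ∈ Finset.univ.filter (fun i : Fin m2 => (i : ℕ) < m1), g1 (ω i) a) := by
      intro M a
      rw [← sum_pS_fn, Finset.mul_sum]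
      exact Finset.sum_congr rfl fun i _ => by ring
    have hR2 : ∀ (N : Matrix (Fin d) (Fin d) ℝ) (a : Fin d),
        (∑ i : Fin m2, (N j a * pD m1 i) * g2 (ω i) a)
          = N j a * ((1 / (m2 : ℝ)) * ∑ i : Fin m2, g2 (ω i) a
              - (1 / (m1 : ℝ)) *
                ∑ i ∈ Finset.univ.filter (fun i : Fin m2 => (i : ℕ) < m1), g2 (ω i) a) := by
      intro N a
      rw [← sum_pD_fn, Finset.mul_sum]
      exact Finset.sum_congr rfl fun i _ => by ring
    simp only [hR1, hR2]
    simp only [mul_add, Finset.sum_add_distrib]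
    congr 1
    exact mul_apply_sum CXX⁻¹ A' j _
  have hjj : ∀ (A' : Matrix (Fin d) (Fin d) ℝ) (j : Fin d),
      covFn (Measure.pi fun _ : Fin m2 => π) (fun ω => βhat A' ω j) (fun ω => βhat A' ω j)
        = ∑ s1 : Fin d ⊕ Fin d, ∑ s2 : Fin d ⊕ Fin d,
            (∑ i : Fin m2, coefA CXX⁻¹ (CXX⁻¹ * A') m1 j s1 i
                * coefA CXX⁻¹ (CXX⁻¹ * A') m1 j s2 i)
              * covFn π (uu g1 g2 s1) (uu g1 g2 s2) := by
    intro A' j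
    have h0 : (fun ω : Fin m2 → 𝒵 => βhat A' ω j)
        = fun ω => ∑ s : Fin d ⊕ Fin d, ∑ i : Fin m2,
            coefA CXX⁻¹ (CXX⁻¹ * A') m1 j s i * uu g1 g2 s (ω i) := funext fun ω => hexp A' ω j
    rw [h0]
    exact cov_sum_eval₂ π m2 (uu g1 g2) (uu g1 g2)
      (coefA CXX⁻¹ (CXX⁻¹ * A') m1 j) (coefA CXX⁻¹ (CXX⁻¹ * A') m1 j)
      hum hum huL2 huL2
  -- identification of scalar covariances with matrix entries
  have hK11 : ∀ a b, covFn π (uu g1 g2 (Sum.inl a)) (uu g1 g2 (Sum.inl b))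
      = covMatrix π g1 g1 a b := fun a b => rfl
  have hK12 : ∀ a b, covFn π (uu g1 g2 (Sum.inl a)) (uu g1 g2 (Sum.inr b))
      = covMatrix π g1 g2 a b := fun a b => rfl
  have hK21 : ∀ a b, covFn π (uu g1 g2 (Sum.inr a)) (uu g1 g2 (Sum.inl b))
      = covMatrix π g2 g1 a b := fun a b => rfl
  have hK22 : ∀ a b, covFn π (uu g1 g2 (Sum.inr a)) (uu g1 g2 (Sum.inr b))
      = covMatrix π g2 g2 a b := fun a b => rfl
  -- trace formula
  have key : ∀ (A' : Matrix (Fin d) (Fin d) ℝ),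
      (covMatrix (Measure.pi fun _ : Fin m2 => π) (βhat A') (βhat A')).trace
        = (1/(m1:ℝ)) * (CXX⁻¹ * covMatrix π g1 g1 * CXX⁻¹ᵀ).trace
          + (1/(m2:ℝ) - 1/(m1:ℝ))
              * (CXX⁻¹ * covMatrix π g1 g2 * (CXX⁻¹ * A')ᵀ).trace
          + ((1/(m2:ℝ) - 1/(m1:ℝ))
              * ((CXX⁻¹ * A') * covMatrix π g2 g1 * CXX⁻¹ᵀ).trace
            + (1/(m1:ℝ) - 1/(m2:ℝ))
              * ((CXX⁻¹ * A') * covMatrix π g2 g2 * (CXX⁻¹ * A')ᵀ).trace) := by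
    intro A'
    have hc11 : ∀ (j a b : Fin d),
        (∑ i : Fin m2, coefA CXX⁻¹ (CXX⁻¹ * A') m1 j (Sum.inl a) i
            * coefA CXX⁻¹ (CXX⁻¹ * A') m1 j (Sum.inl b) i)
          = CXX⁻¹ j a * CXX⁻¹ j b * (1/(m1:ℝ)) := by
      intro j a b
      simp only [coefA]
      have h : ∀ i : Fin m2, (CXX⁻¹ j a * pS m1 i) * (CXX⁻¹ j b * pS m1 i)
          = (CXX⁻¹ j a * CXX⁻¹ j b) * (pS m1 i * pS m1 i) := fun i => by ring
      simp only [h]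
      rw [← Finset.mul_sum, sum_pS_pS hm1 hm12]
    have hc12 : ∀ (j a b : Fin d),
        (∑ i : Fin m2, coefA CXX⁻¹ (CXX⁻¹ * A') m1 j (Sum.inl a) i
            * coefA CXX⁻¹ (CXX⁻¹ * A') m1 j (Sum.inr b) i)
          = CXX⁻¹ j a * (CXX⁻¹ * A') j b * (1/(m2:ℝ) - 1/(m1:ℝ)) := by
      intro j a b
      simp only [coefA]
      have h : ∀ i : Fin m2, (CXX⁻¹ j a * pS m1 i) * ((CXX⁻¹ * A') j b * pD m1 i)
          = (CXX⁻¹ j a * (CXX⁻¹ * A') j b) * (pS m1 i * pD m1 i) := fun i => by ring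
      simp only [h]
      rw [← Finset.mul_sum, sum_pS_pD hm1 hm12]
    have hc21 : ∀ (j a b : Fin d),
        (∑ i : Fin m2, coefA CXX⁻¹ (CXX⁻¹ * A') m1 j (Sum.inr a) i
            * coefA CXX⁻¹ (CXX⁻¹ * A') m1 j (Sum.inl b) i)
          = (CXX⁻¹ * A') j a * CXX⁻¹ j b * (1/(m2:ℝ) - 1/(m1:ℝ)) := by
      intro j a b
      simp only [coefA]
      have h : ∀ i : Fin m2, ((CXX⁻¹ * A') j a * pD m1 i) * (CXX⁻¹ j b * pS m1 i)
          = ((CXX⁻¹ * A') j a * CXX⁻¹ j b) * (pD m1 i * pS m1 i) := fun i => by ring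
      simp only [h]
      rw [← Finset.mul_sum, sum_pD_pS hm1 hm12]
    have hc22 : ∀ (j a b : Fin d),
        (∑ i : Fin m2, coefA CXX⁻¹ (CXX⁻¹ * A') m1 j (Sum.inr a) i
            * coefA CXX⁻¹ (CXX⁻¹ * A') m1 j (Sum.inr b) i)
          = (CXX⁻¹ * A') j a * (CXX⁻¹ * A') j b * (1/(m1:ℝ) - 1/(m2:ℝ)) := by
      intro j a b
      simp only [coefA]
      have h : ∀ i : Fin m2, ((CXX⁻¹ * A') j a * pD m1 i) * ((CXX⁻¹ * A') j b * pD m1 i)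
          = ((CXX⁻¹ * A') j a * (CXX⁻¹ * A') j b) * (pD m1 i * pD m1 i) := fun i => by ring
      simp only [h]
      rw [← Finset.mul_sum, sum_pD_pD hm1 hm12]
    have h0 : (covMatrix (Measure.pi fun _ : Fin m2 => π) (βhat A') (βhat A')).trace
        = ∑ j, covFn (Measure.pi fun _ : Fin m2 => π)
            (fun ω => βhat A' ω j) (fun ω => βhat A' ω j) := rfl
    rw [h0]
    simp only [hjj A']
    simp only [Fintype.sum_sum_type]
    simp only [hc11, hc12, hc21, hc22, hK11, hK12, hK21, hK22]
    simp only [Finset.sum_add_distrib]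
    rw [triple_sum_trace, triple_sum_trace, triple_sum_trace, triple_sum_trace]
  -- matrix algebra: complete the square
  have hC22T : (covMatrix π g2 g2)ᵀ = covMatrix π g2 g2 := by
    ext a b
    simp only [Matrix.transpose_apply, covMatrix, Matrix.of_apply]
    rw [mul_comm (∫ ω, g2 ω b ∂π)]
    congr 1
    exact integral_congr_ae (Filter.Eventually.of_forall fun z => mul_comm _ _)
  have hC21T : covMatrix π g2 g1 = (covMatrix π g1 g2)ᵀ := by
    ext a b
    simp only [Matrix.transpose_apply, covMatrix, Matrix.of_apply]
    rw [mul_comm (∫ ω, g1 ω b ∂π)]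
    congr 1
    exact integral_congr_ae (Filter.Eventually.of_forall fun z => mul_comm _ _)
  have hsub : Astar * covMatrix π g2 g2 = covMatrix π g1 g2 := by
    rw [hAstar, Matrix.nonsing_inv_mul_cancel_right _ _ hC22]
  have h21 : covMatrix π g2 g1 = covMatrix π g2 g2 * Astarᵀ := by
    rw [hC21T, ← hsub, Matrix.transpose_mul, hC22T]
  -- nonnegativity of the quadratic remainder
  have hQ : 0 ≤ ((CXX⁻¹ * (A - Astar)) * covMatrix π g2 g2
      * (CXX⁻¹ * (A - Astar))ᵀ).trace := by
    rw [← trace_form]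
    refine Finset.sum_nonneg fun j _ => ?_
    have h := quad_nonneg (π := π) (fun a => fun z => g2 z a) hg2m hg2L2
      (fun a => (CXX⁻¹ * (A - Astar)) j a)
    exact h
  have hMexp : (CXX⁻¹ * (A - Astar)) * covMatrix π g2 g2 * (CXX⁻¹ * (A - Astar))ᵀ
      = (CXX⁻¹ * A) * covMatrix π g2 g2 * (CXX⁻¹ * A)ᵀ
        - (CXX⁻¹ * A) * covMatrix π g2 g1 * CXX⁻¹ᵀ
        - CXX⁻¹ * covMatrix π g1 g2 * (CXX⁻¹ * A)ᵀ
        + CXX⁻¹ * covMatrix π g1 g2 * (CXX⁻¹ * Astar)ᵀ := by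
    rw [h21, ← hsub]
    simp only [mul_sub, sub_mul, Matrix.transpose_mul, Matrix.transpose_sub, mul_assoc]
    abel
  have hE2 : (CXX⁻¹ * Astar) * covMatrix π g2 g1 * CXX⁻¹ᵀ
      = CXX⁻¹ * covMatrix π g1 g2 * (CXX⁻¹ * Astar)ᵀ := by
    rw [h21, ← hsub, Matrix.transpose_mul]
    simp only [mul_assoc]
  have hE3 : (CXX⁻¹ * Astar) * covMatrix π g2 g2 * (CXX⁻¹ * Astar)ᵀ
      = CXX⁻¹ * covMatrix π g1 g2 * (CXX⁻¹ * Astar)ᵀ := by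
    rw [← hsub, Matrix.transpose_mul]
    simp only [mul_assoc]
  rw [hMexp] at hQ
  simp only [Matrix.trace_sub, Matrix.trace_add] at hQ
  have hc : (0:ℝ) ≤ 1/(m1:ℝ) - 1/(m2:ℝ) := by
    have h2 : (0:ℝ) < (m1:ℝ) := by exact_mod_cast hm1
    have h3 : (m1:ℝ) ≤ (m2:ℝ) := by exact_mod_cast hm12
    have := one_div_le_one_div_of_le h2 h3
    linarith
  rw [key A, key Astar, hE2, hE3]
  nlinarith [mul_nonneg hc hQ]
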